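/- For X a standard Laplace random variable and v > 0, E[|X + v| · |X|] = v + v e^{-v} + 2 e^{-v}. -/

import Mathlib

/-!
Folding the integral over `ℝ` onto `(0, ∞)` via `x ↦ -x` and using
`|x + v| + |x - v| = 2 max(|x|, |v|)`, the expectation becomes
`∫₀^∞ x max(x, v) e^{-x} dx = ∫₀^v v x e^{-x} dx + ∫_v^∞ x² e^{-x} dx`. Both pieces are integrals
of a quadratic times `e^{-x}`, whose primitive is `-(p + p' + p'') e^{-x}`.
-/

open MeasureTheory Real Set Filter Topology

theorem abs_add_add_abs_sub {α : Type*} [AddCommGroup α] [LinearOrder α] [IsOrderedAddMonoid α]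
    (a b : α) : |a + b| + |a - b| = 2 • max |a| |b| := by
  grind [abs_of_nonneg, abs_of_nonpos, le_total]

theorem integral_eq_integral_Ioi_add_comp_neg {E : Type*} [NormedAddCommGroup E]
    [NormedSpace ℝ E] {f : ℝ → E} (hpos : IntegrableOn f (Ioi 0))
    (hneg : IntegrableOn (fun x => f (-x)) (Ioi 0)) :
    ∫ x, f x = ∫ x in Ioi 0, (f x + f (-x)) := by
  have hIic : IntegrableOn f (Iic 0) := by
    have hneg_emb : MeasurableEmbedding (fun x : ℝ => -x) :=
      (Homeomorph.neg ℝ).measurableEmbedding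
    rw [← Measure.map_neg_eq_self (volume : Measure ℝ), hneg_emb.integrableOn_map_iff]
    simpa [Function.comp_def, integrableOn_Ici_iff_integrableOn_Ioi] using hneg
  rw [← intervalIntegral.integral_Iic_add_Ioi hIic hpos, integral_add hpos hneg,
    integral_comp_neg_Ioi, neg_zero, add_comm]

section QuadraticMulExpNeg

variable (a b c : ℝ)

theorem hasDerivAt_quadratic_mul_exp_neg (x : ℝ) :
    HasDerivAt (fun x => -((a * x ^ 2 + (2 * a + b) * x + (2 * a + b + c)) * exp (-x)))
      ((a * x ^ 2 + b * x + c) * exp (-x)) x := by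
  have hp : HasDerivAt (fun x => a * x ^ 2 + (2 * a + b) * x + (2 * a + b + c))
      (a * (2 * x) + (2 * a + b)) x := by
    simpa using (((hasDerivAt_pow 2 x).const_mul a).add
      ((hasDerivAt_id x).const_mul (2 * a + b))).add_const (2 * a + b + c)
  exact ((hp.mul (hasDerivAt_neg x).exp).neg).congr_deriv (by ring)

theorem tendsto_quadratic_mul_exp_neg_atTop :
    Tendsto (fun x => (a * x ^ 2 + b * x + c) * exp (-x)) atTop (𝓝 0) := by
  have h := (((tendsto_pow_mul_exp_neg_atTop_nhds_zero 2).const_mul a).add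
    ((tendsto_pow_mul_exp_neg_atTop_nhds_zero 1).const_mul b)).add
    ((tendsto_pow_mul_exp_neg_atTop_nhds_zero 0).const_mul c)
  simp only [mul_zero, add_zero] at h
  exact h.congr fun x => by ring

theorem integral_quadratic_mul_exp_neg (s t : ℝ) :
    ∫ x in s..t, (a * x ^ 2 + b * x + c) * exp (-x) =
      (a * s ^ 2 + (2 * a + b) * s + (2 * a + b + c)) * exp (-s) -
        (a * t ^ 2 + (2 * a + b) * t + (2 * a + b + c)) * exp (-t) := by
  rw [intervalIntegral.integral_eq_sub_of_hasDerivAt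
    (fun x _ => hasDerivAt_quadratic_mul_exp_neg a b c x)
    ((by fun_prop : Continuous _).intervalIntegrable _ _)]
  ring

variable {a b c} {t : ℝ} (hnonneg : ∀ x ∈ Ioi t, 0 ≤ a * x ^ 2 + b * x + c)
include hnonneg

theorem integrableOn_Ioi_quadratic_mul_exp_neg :
    IntegrableOn (fun x => (a * x ^ 2 + b * x + c) * exp (-x)) (Ioi t) :=
  integrableOn_Ioi_deriv_of_nonneg' (fun x _ => hasDerivAt_quadratic_mul_exp_neg a b c x)
    (fun x hx => mul_nonneg (hnonneg x hx) (exp_nonneg _))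
    (by simpa using (tendsto_quadratic_mul_exp_neg_atTop a (2 * a + b) (2 * a + b + c)).neg)

theorem integral_Ioi_quadratic_mul_exp_neg :
    ∫ x in Ioi t, (a * x ^ 2 + b * x + c) * exp (-x) =
      (a * t ^ 2 + (2 * a + b) * t + (2 * a + b + c)) * exp (-t) := by
  rw [integral_Ioi_of_hasDerivAt_of_nonneg' (fun x _ => hasDerivAt_quadratic_mul_exp_neg a b c x)
    (fun x hx => mul_nonneg (hnonneg x hx) (exp_nonneg _))
    (by simpa using (tendsto_quadratic_mul_exp_neg_atTop a (2 * a + b) (2 * a + b + c)).neg)]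
  ring

end QuadraticMulExpNeg

section MulMaxMulExpNeg

variable {v : ℝ}

theorem mul_max_mul_exp_neg_eqOn_Ioi :
    EqOn (fun x => x * max x v * exp (-x)) (fun x => (1 * x ^ 2 + 0 * x + 0) * exp (-x))
      (Ioi v) := fun x hx => by
  simp only [max_eq_left (le_of_lt (mem_Ioi.mp hx))]
  ring

theorem integrableOn_Ioi_mul_max_mul_exp_neg (hv : 0 ≤ v) :
    IntegrableOn (fun x => x * max x v * exp (-x)) (Ioi 0) := by
  rw [← Ioc_union_Ioi_eq_Ioi hv]
  exact (by fun_prop : Continuous fun x => x * max x v * exp (-x)).integrableOn_Ioc.union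
    ((integrableOn_Ioi_quadratic_mul_exp_neg fun x _ => by simpa using sq_nonneg x).congr_fun
      mul_max_mul_exp_neg_eqOn_Ioi.symm measurableSet_Ioi)

theorem integral_Ioi_mul_max_mul_exp_neg (hv : 0 ≤ v) :
    ∫ x in Ioi 0, x * max x v * exp (-x) = v + (v + 2) * exp (-v) := by
  have hIoc : ∫ x in Ioc 0 v, x * max x v * exp (-x) = v - (v ^ 2 + v) * exp (-v) := by
    have hEq : EqOn (fun x => x * max x v * exp (-x))
        (fun x => (0 * x ^ 2 + v * x + 0) * exp (-x)) (Ioc 0 v) := fun x hx => by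
      simp only [max_eq_right hx.2]
      ring
    rw [setIntegral_congr_fun measurableSet_Ioc hEq, ← intervalIntegral.integral_of_le hv,
      integral_quadratic_mul_exp_neg]
    simp only [exp_zero, neg_zero]
    ring
  have hIoi : ∫ x in Ioi v, x * max x v * exp (-x) = (v ^ 2 + 2 * v + 2) * exp (-v) := by
    rw [setIntegral_congr_fun measurableSet_Ioi mul_max_mul_exp_neg_eqOn_Ioi,
      integral_Ioi_quadratic_mul_exp_neg fun x _ => by simpa using sq_nonneg x]
    ring
  have hint := integrableOn_Ioi_mul_max_mul_exp_neg hv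
  rw [← Ioc_union_Ioi_eq_Ioi hv] at hint ⊢
  rw [setIntegral_union (Ioc_disjoint_Ioi le_rfl) measurableSet_Ioi
    (hint.mono_set subset_union_left) (hint.mono_set subset_union_right), hIoc, hIoi]
  ring

end MulMaxMulExpNeg

/-- For X standard Laplace and v > 0, E[|X+v|·|X|] = v + v e^{-v} + 2 e^{-v}. -/
theorem laplace_abs_prod (v : ℝ) (hv : 0 < v) :
    ∫ x : ℝ, |x + v| * |x| * (1 / 2 * Real.exp (-|x|))
      = v + v * Real.exp (-v) + 2 * Real.exp (-v) := by
  set f : ℝ → ℝ := fun x => |x + v| * |x| * (1 / 2 * exp (-|x|))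
  have hfold : EqOn (fun x => f x + f (-x)) (fun x => x * max x v * exp (-x)) (Ioi 0) :=
    fun x hx => by
      have hx : 0 < x := hx
      have hsum := abs_add_add_abs_sub x v
      simp only [f, abs_neg, neg_add_eq_sub, abs_sub_comm v x, abs_of_pos hx, abs_of_pos hv,
        two_nsmul] at hsum ⊢
      linear_combination x * exp (-x) / 2 * hsum
  have hpos : IntegrableOn f (Ioi 0) := by
    refine (integrableOn_Ioi_quadratic_mul_exp_neg (a := 1 / 2) (b := v / 2) (c := 0)
      fun x hx => ?_).congr_fun (fun x hx => ?_) measurableSet_Ioi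
    · have hx : 0 < x := hx
      positivity
    · have hx : 0 < x := hx
      simp only [f, abs_of_pos hx, abs_of_pos (add_pos hx hv)]
      ring
  have hneg : IntegrableOn (fun x => f (-x)) (Ioi 0) :=
    ((integrableOn_Ioi_mul_max_mul_exp_neg hv.le).sub hpos).congr_fun
      (fun x hx => by simp only [Pi.sub_apply, ← hfold hx]; ring) measurableSet_Ioi
  rw [integral_eq_integral_Ioi_add_comp_neg hpos hneg,
    setIntegral_congr_fun measurableSet_Ioi hfold, integral_Ioi_mul_max_mul_exp_neg hv.le]
  ring
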